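/- Let A ∈ ℝ^{n×n}, B ∈ ℝ^{n×m} and suppose (A, B) is controllable, i.e., rank [B, AB, ..., A^{n-1}B] = n. Let X₀ ∈ ℝ^{n×T}, U ∈ ℝ^{m×T} with X₁ = A X₀ + B U and rank [U; X₀] = n + m. Then for every sequence of matrices K(0), ..., K(N-1) ∈ ℝ^{m×n}, there exist G(0), ..., G(N-1) ∈ ℝ^{T×n} with U G(k) = K(k), X₀ G(k) = I_n, and the closed-loop product satisfies (A + B K(N-1)) ⋯ (A + B K(0)) = (X₁ G(N-1)) ⋯ (X₁ G(0)). -/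

import Mathlib

/-!
The rank condition makes `[U; X₀]` surjective, so it has a right inverse `R`, and
`G(k) := R [K(k); I]` solves `[U; X₀] G(k) = [K(k); I]`. Substituting `X₁ = A X₀ + B U` gives
`X₁ G(k) = A + B K(k)` factor by factor, hence equality of the two products.
-/

open Matrix

theorem Matrix.exists_mul_eq_one_of_rank_eq_card {K m n : Type*} [Field K] [Fintype m]
    [DecidableEq m] [Fintype n] (M : Matrix m n K) (h : M.rank = Fintype.card m) :
    ∃ R : Matrix n m K, M * R = 1 := by
  rw [← mulVec_surjective_iff_exists_right_inverse]
  have hrange : LinearMap.range M.mulVecLin = ⊤ := by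
    apply Submodule.eq_top_of_finrank_eq
    rw [← Matrix.rank, h, Module.finrank_fintype_fun_eq_card]
  exact LinearMap.range_eq_top.mp hrange

theorem Matrix.exists_fromRows_mul_eq {K m₁ m₂ n p : Type*} [Field K] [Fintype m₁] [Fintype m₂]
    [DecidableEq m₁] [DecidableEq m₂] [Fintype n] (M₁ : Matrix m₁ n K) (M₂ : Matrix m₂ n K)
    (h : (fromRows M₁ M₂).rank = Fintype.card m₁ + Fintype.card m₂)
    (Y₁ : Matrix m₁ p K) (Y₂ : Matrix m₂ p K) :
    ∃ G : Matrix n p K, M₁ * G = Y₁ ∧ M₂ * G = Y₂ := by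
  obtain ⟨R, hR⟩ := (fromRows M₁ M₂).exists_mul_eq_one_of_rank_eq_card
    (by rwa [Fintype.card_sum])
  refine ⟨R * fromRows Y₁ Y₂, fromRows_inj ?_⟩
  rw [← fromRows_mul, ← Matrix.mul_assoc, hR, Matrix.one_mul]

theorem Matrix.add_mul_eq_mul_of_eq_add_mul {R n m T : Type*} [Semiring R] [Fintype n] [Fintype m]
    [Fintype T] [DecidableEq n] {A : Matrix n n R} {B : Matrix n m R} {U : Matrix m T R}
    {X₀ X₁ : Matrix n T R} {K : Matrix m n R} {G : Matrix T n R}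
    (hdata : X₁ = A * X₀ + B * U) (hU : U * G = K) (hX : X₀ * G = 1) :
    A + B * K = X₁ * G := by
  rw [hdata, Matrix.add_mul, Matrix.mul_assoc, Matrix.mul_assoc, hU, hX, Matrix.mul_one]

theorem data_driven_closed_loop_product_general (n m T N : ℕ)
    (A : Matrix (Fin n) (Fin n) ℝ) (B : Matrix (Fin n) (Fin m) ℝ)
    (U : Matrix (Fin m) (Fin T) ℝ) (X₀ X₁ : Matrix (Fin n) (Fin T) ℝ)
    (hdata : X₁ = A * X₀ + B * U)
    (hrank : (Matrix.fromRows U X₀).rank = m + n) :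
    ∀ K : ℕ → Matrix (Fin m) (Fin n) ℝ,
      ∃ G : ℕ → Matrix (Fin T) (Fin n) ℝ,
        (∀ k, k < N → U * G k = K k ∧ X₀ * G k = 1) ∧
        ((List.range N).reverse.map (fun k => A + B * K k)).prod =
          ((List.range N).reverse.map (fun k => X₁ * G k)).prod := by
  intro K
  choose G hG using fun k =>
    exists_fromRows_mul_eq U X₀ (by simpa using hrank) (K k) (1 : Matrix (Fin n) (Fin n) ℝ)
  have hfactor : (fun k => A + B * K k) = fun k => X₁ * G k :=
    funext fun k => add_mul_eq_mul_of_eq_add_mul hdata (hG k).1 (hG k).2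
  exact ⟨G, fun k _ => hG k, by rw [hfactor]⟩

/-- Data-driven representation of time-varying closed-loop trajectories: if
`(A,B)` is controllable and the data matrices satisfy `X₁ = A X₀ + B U` with
`rank [U; X₀] = m + n`, then every sequence of gains `K(k)` admits matrices
`G(k)` with `U G(k) = K(k)`, `X₀ G(k) = I`, and
`(A + B K(N-1)) ⋯ (A + B K(0)) = (X₁ G(N-1)) ⋯ (X₁ G(0))`. -/
theorem data_driven_closed_loop_product (n m T N : ℕ)
    (A : Matrix (Fin n) (Fin n) ℝ) (B : Matrix (Fin n) (Fin m) ℝ)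
    (ctrb : Matrix (Fin n) (Fin n × Fin m) ℝ)
    (hctrb : ∀ (i : Fin n) (j : Fin n) (l : Fin m), ctrb i (j, l) = (A ^ (j : ℕ) * B) i l)
    (hcontrollable : ctrb.rank = n)
    (U : Matrix (Fin m) (Fin T) ℝ) (X₀ X₁ : Matrix (Fin n) (Fin T) ℝ)
    (hdata : X₁ = A * X₀ + B * U)
    (hrank : (Matrix.fromRows U X₀).rank = m + n) :
    ∀ K : ℕ → Matrix (Fin m) (Fin n) ℝ,
      ∃ G : ℕ → Matrix (Fin T) (Fin n) ℝ,
        (∀ k, k < N → U * G k = K k ∧ X₀ * G k = 1) ∧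
        ((List.range N).reverse.map (fun k => A + B * K k)).prod =
          ((List.range N).reverse.map (fun k => X₁ * G k)).prod :=
  data_driven_closed_loop_product_general n m T N A B U X₀ X₁ hdata hrank
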